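/- arXiv:2507.12770 — 6 statements merged into one kernel-verified Lean document; each statement's English description precedes it below -/
import Mathlib

section
/- Let n be prime, f(x) ∈ ℤ[x] an irreducible polynomial of degree n with roots α₁,...,αₙ, and c₁,...,cₙ ∈ ℚ. If the second-highest coefficient a_{n-1} of f is nonzero and c₁α₁ + ... + cₙαₙ = 0, then c₁ = c₂ = ... = cₙ = 0. In particular, α₁,...,αₙ are linearly independent over ℚ. -/
/-!
Let `σ` be an element of order `n = deg f` in the Galois group (it exists by Cauchy's theorem,
as `n` divides the order of the group). Being nontrivial of prime order, `σ` permutes the roots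
cyclically: they are `a, σ a, …, σ^(n-1) a`. A relation `∑ d_j σ^j a = 0` says `D(σ) a = 0` for
`D = ∑ d_j X^j`, of degree `< n`. Since `σ^n = 1` and `X^n - 1 = Φ_n (X - 1)` with `Φ_n`
irreducible, either `D` is coprime to `Φ_n`, and then `(σ - 1) a = 0`, which is absurd, or
`D = c Φ_n`, and the relation reads `c (α₁ + ⋯ + αₙ) = -c a_{n-1} = 0`, whence `c = 0`.
-/

open Polynomial Function

namespace Polynomial

theorem coeff_cyclotomic_prime_of_lt (R : Type*) [Ring R] {p i : ℕ} [Fact p.Prime] (hi : i < p) :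
    (cyclotomic p R).coeff i = 1 := by
  simp [cyclotomic_prime, coeff_X_pow, hi]

theorem roots_eq_univ_map {R ι : Type*} [CommRing R] [IsDomain R] [Fintype ι]
    {p : R[X]} (hp : p ≠ 0) {w : ι → R} (hw : Injective w) (hroot : ∀ i, p.IsRoot (w i))
    (hcard : p.natDegree ≤ Fintype.card ι) :
    p.roots = Finset.univ.val.map w := by
  refine (Multiset.eq_of_le_of_card_le ?_ ?_).symm
  · rw [Multiset.le_iff_subset (Fintype.nodup_map_univ_iff_injective.mpr hw)]
    intro x hx
    obtain ⟨i, -, rfl⟩ := Multiset.mem_map.mp hx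
    exact (mem_roots hp).mpr (hroot i)
  · simpa using (card_roots' p).trans hcard

end Polynomial

theorem LinearIndependent.of_univ_map_eq {R M ι : Type*} [Ring R] [Nontrivial R]
    [AddCommGroup M] [Module R M] [Fintype ι] {v w : ι → M} (hw : LinearIndependent R w)
    (h : Finset.univ.val.map v = Finset.univ.val.map w) : LinearIndependent R v := by
  have hv : Injective v := by
    rw [← Fintype.nodup_map_univ_iff_injective, h, Fintype.nodup_map_univ_iff_injective]
    exact hw.injective
  have hrange : Set.range v = Set.range w := by
    ext x
    simpa using congrArg (x ∈ ·) h
  rw [← linearIndepOn_id_range_iff hv, hrange, linearIndepOn_id_range_iff hw.injective]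
  exact hw

theorem MulAction.injective_pow_smul {M α : Type*} [Monoid M] [MulAction M α] {n : ℕ}
    [Fact n.Prime] {g : M} {x : α} (hg : g ^ n = 1) (hx : g • x ≠ x) :
    Injective fun j : Fin n => g ^ (j : ℕ) • x := by
  have hper : minimalPeriod (g • ·) x = n :=
    minimalPeriod_eq_prime (by simp [IsPeriodicPt, IsFixedPt, smul_iterate, hg]) hx
  intro i j hij
  refine Fin.ext (iterate_injOn_Iio_minimalPeriod (f := (g • ·)) (x := x) ?_ ?_ ?_)
  · simp [hper]
  · simp [hper]
  · simpa [smul_iterate] using hij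

section CyclicVectors

variable {K V : Type*} [Field K] [AddCommGroup V] [Module K V] {n : ℕ} [Fact n.Prime]
  {T : Module.End K V} {v : V}

theorem cyclotomic_dvd_of_aeval_apply_eq_zero (hΦ : Irreducible (cyclotomic n K))
    (hT : T ^ n = 1) (hv : T v ≠ v) {D : K[X]} (hD : aeval T D v = 0) :
    cyclotomic n K ∣ D := by
  by_contra hdvd
  have hcop : IsCoprime (cyclotomic n K) D := hΦ.coprime_iff_not_dvd.mpr hdvd
  have hΦ_ker : aeval T (X - 1 : K[X]) v ∈ LinearMap.ker (aeval T (cyclotomic n K)) := by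
    rw [LinearMap.mem_ker, ← Module.End.mul_apply, ← map_mul, cyclotomic_prime_mul_X_sub_one,
      map_sub, map_pow, aeval_X, map_one, hT, sub_self, LinearMap.zero_apply]
  have hD_ker : aeval T (X - 1 : K[X]) v ∈ LinearMap.ker (aeval T D) := by
    rw [LinearMap.mem_ker, ← Module.End.mul_apply, ← map_mul, mul_comm, map_mul,
      Module.End.mul_apply, hD, map_zero]
  have := (disjoint_ker_aeval_of_isCoprime T hcop).le_bot ⟨hΦ_ker, hD_ker⟩
  exact hv (by simpa [sub_eq_zero] using this)

theorem eq_of_sum_smul_pow_apply_eq_zero (hΦ : Irreducible (cyclotomic n K))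
    (hT : T ^ n = 1) (hv : T v ≠ v) {g : Fin n → K} (hg : ∑ j, g j • (T ^ (j : ℕ)) v = 0)
    (i j : Fin n) : g i = g j := by
  classical
  set D := ofFn n g
  have hD : aeval T D v = 0 := by
    simpa [D, ofFn_eq_sum_monomial, aeval_monomial] using hg
  have hdeg : D.natDegree ≤ (cyclotomic n K).natDegree := by
    have hlt : D.natDegree < n := ofFn_natDegree_lt (Fact.out : n.Prime).one_le g
    rw [natDegree_cyclotomic, Nat.totient_prime Fact.out]
    omega
  obtain ⟨c, hc⟩ : ∃ c, D = C c * cyclotomic n K :=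
    ⟨_, eq_leadingCoeff_mul_of_monic_of_dvd_of_natDegree_le (cyclotomic.monic n K)
      (cyclotomic_dvd_of_aeval_apply_eq_zero hΦ hT hv hD) hdeg⟩
  have hcoeff (k : Fin n) : g k = c := by
    rw [← ofFn_coeff_eq_val_of_lt g k.isLt]
    change D.coeff k = c
    rw [hc, coeff_C_mul, coeff_cyclotomic_prime_of_lt K k.isLt, mul_one]
  rw [hcoeff i, hcoeff j]

theorem linearIndependent_pow_apply (hΦ : Irreducible (cyclotomic n K)) (hT : T ^ n = 1)
    (hv : T v ≠ v) (hsum : ∑ j : Fin n, (T ^ (j : ℕ)) v ≠ 0) :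
    LinearIndependent K fun j : Fin n => (T ^ (j : ℕ)) v := by
  refine Fintype.linearIndependent_iff.mpr fun g hg i => ?_
  have hconst (j : Fin n) : g j = g i := eq_of_sum_smul_pow_apply_eq_zero hΦ hT hv hg j i
  simp_rw [hconst, ← Finset.smul_sum] at hg
  exact (smul_eq_zero.mp hg).resolve_right hsum

end CyclicVectors

namespace Polynomial

variable {K : Type*} [Field K] {f : K[X]}

theorem Gal.exists_orderOf_eq_natDegree [CharZero K] (hirr : Irreducible f)
    (hdeg : f.natDegree.Prime) :
    ∃ σ : f.Gal, orderOf σ = f.natDegree :=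
  have := Fact.mk hdeg
  exists_prime_orderOf_dvd_card' _ (Gal.prime_degree_dvd_card hirr hdeg)

theorem Gal.exists_mem_rootSet_apply_ne {σ : f.Gal} (hσ : σ ≠ 1) :
    ∃ a ∈ f.rootSet f.SplittingField, σ a ≠ a := by
  by_contra! h
  exact hσ (Gal.ext f h)

theorem exists_roots_eq_orbit [CharZero K] (hirr : Irreducible f) (hdeg : f.natDegree.Prime) :
    ∃ (σ : f.SplittingField ≃ₐ[K] f.SplittingField) (a : f.SplittingField),
      orderOf σ = f.natDegree ∧ σ a ≠ a ∧
      (f.map (algebraMap K f.SplittingField)).roots =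
        Finset.univ.val.map fun j : Fin f.natDegree => (σ ^ (j : ℕ)) a := by
  have := Fact.mk hdeg
  obtain ⟨σ, hσ⟩ := Gal.exists_orderOf_eq_natDegree hirr hdeg
  have hσ1 : σ ≠ 1 := by
    rintro rfl
    exact hdeg.one_lt.ne' (hσ ▸ orderOf_one)
  obtain ⟨a, ha, hσa⟩ := Gal.exists_mem_rootSet_apply_ne hσ1
  refine ⟨σ, a, hσ, hσa, roots_eq_univ_map (map_ne_zero hirr.ne_zero) ?_ ?_ (by simp)⟩
  · exact MulAction.injective_pow_smul (hσ ▸ pow_orderOf_eq_one σ) hσa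
  · intro j
    have := (mem_rootSet.mp ha).2
    simp [aeval_algHom_apply, this]

theorem exists_linearIndependent_roots_splittingField [CharZero K] (hirr : Irreducible f)
    (hmonic : f.Monic) (hdeg : f.natDegree.Prime) (hΦ : Irreducible (cyclotomic f.natDegree K))
    (hnext : f.nextCoeff ≠ 0) :
    ∃ w : Fin f.natDegree → f.SplittingField, LinearIndependent K w ∧
      (f.map (algebraMap K f.SplittingField)).roots = Finset.univ.val.map w := by
  have := Fact.mk hdeg
  obtain ⟨σ, a, hσ, hσa, hroots⟩ := exists_roots_eq_orbit hirr hdeg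
  have horbit (j : ℕ) : (σ.toLinearMap ^ j) a = (σ ^ j) a := by
    rw [← AlgEquiv.pow_toLinearMap, AlgEquiv.toLinearMap_apply]
  have hT : σ.toLinearMap ^ f.natDegree = 1 := by
    rw [← AlgEquiv.pow_toLinearMap, ← hσ, pow_orderOf_eq_one, AlgEquiv.one_toLinearMap]
  have hsum : ∑ j : Fin f.natDegree, (σ.toLinearMap ^ (j : ℕ)) a ≠ 0 := by
    have := (SplittingField.splits f).nextCoeff_eq_neg_sum_roots_of_monic (hmonic.map _)
    rw [nextCoeff_map (algebraMap K _).injective, hroots] at this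
    simp_rw [horbit, Finset.sum_eq_multiset_sum]
    intro h
    rw [h, neg_zero, map_eq_zero] at this
    exact hnext this
  refine ⟨_, linearIndependent_pow_apply hΦ hT hσa hsum, ?_⟩
  simpa [horbit] using hroots

theorem exists_linearIndependent_roots [CharZero K] {L : Type*} [Field L] [Algebra K L]
    (hirr : Irreducible f) (hmonic : f.Monic) (hdeg : f.natDegree.Prime)
    (hΦ : Irreducible (cyclotomic f.natDegree K)) (hnext : f.nextCoeff ≠ 0)
    (hsplit : (f.map (algebraMap K L)).Splits) :
    ∃ w : Fin f.natDegree → L, LinearIndependent K w ∧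
      (f.map (algebraMap K L)).roots = Finset.univ.val.map w := by
  obtain ⟨w, hw, hroots⟩ :=
    exists_linearIndependent_roots_splittingField hirr hmonic hdeg hΦ hnext
  let φ := SplittingField.lift f hsplit
  refine ⟨φ ∘ w, hw.map' φ.toLinearMap (LinearMap.ker_eq_bot.mpr φ.injective), ?_⟩
  rw [← Multiset.map_map, ← hroots, ← φ.comp_algebraMap, ← map_map,
    (SplittingField.splits f).roots_map]
  rfl

end Polynomial

/-- Let n be prime, f irreducible of degree n with roots α₁,...,αₙ, and
c₁,...,cₙ ∈ ℚ. If a_{n-1} ≠ 0 and ∑ cᵢαᵢ = 0 then all cᵢ = 0; in particular the roots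
are linearly independent over ℚ. -/
theorem stmt_0 (n : ℕ) (hn : n.Prime) (f : Polynomial ℚ) (hirr : Irreducible f)
    (hmonic : f.Monic) (hdeg : f.natDegree = n) (α : Fin n → ℂ)
    (hroots : (f.map (algebraMap ℚ ℂ)).roots = (List.ofFn α : Multiset ℂ))
    (ha : f.coeff (n - 1) ≠ 0) (c : Fin n → ℚ)
    (hc : ∑ i, (c i : ℂ) * α i = 0) :
    (∀ i, c i = 0) ∧ LinearIndependent ℚ α := by
  subst hdeg
  obtain ⟨w, hw, hw_roots⟩ := exists_linearIndependent_roots hirr hmonic hn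
    (cyclotomic.irreducible_rat hn.pos) (by rwa [nextCoeff_of_natDegree_pos hn.pos])
    (IsAlgClosed.splits (f.map (algebraMap ℚ ℂ)))
  have hα : LinearIndependent ℚ α :=
    hw.of_univ_map_eq (by rw [Fin.univ_val_map, ← hroots, hw_roots])
  refine ⟨fun i => Fintype.linearIndependent_iff.mp hα c ?_ i, hα⟩
  simpa [Rat.smul_def] using hc
end

section
/- Let n be prime and f(x) ∈ ℤ[x] a monic irreducible polynomial of degree n with roots α₁,...,αₙ and coefficient a_{n-1} of x^{n-1} equal to 0. Then α₁,...,α_{n-1} are linearly independent over ℚ and αₙ = -(α₁ + ... + α_{n-1}); thus the ℚ-span of {α₁,...,αₙ} has dimension n-1. -/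
/-!
The Galois group of `f` contains an element `σ` of order `n`, which permutes the `n` roots
cyclically: they are `γ, σ γ, …, σ^(n-1) γ`. A rational relation `∑ c_k σ^k γ = 0` says
`p(σ) γ = 0` for `p = ∑ c_k X^k`. Such `p` form an ideal of `ℚ[X]` which contains
`Φ_n = 1 + X + ⋯ + X^(n-1)` (the roots sum to `0`) but not `1` (as `γ ≠ 0`); since `Φ_n` is
irreducible, it divides `p`, and `deg p < n` forces `p = c Φ_n`, i.e. all `c_k` are equal.
The three claims follow from this and `∑ αᵢ = 0` by linear algebra.
-/

open Polynomial

section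
variable {R M : Type*} [Ring R] [AddCommGroup M] [Module R M] {m : ℕ} {v : Fin (m + 1) → M}

theorem linearIndependent_castSucc_of_forall_eq
    (h : ∀ c : Fin (m + 1) → R, ∑ i, c i • v i = 0 → ∀ i j, c i = c j) :
    LinearIndependent R fun i : Fin m => v i.castSucc := by
  refine Fintype.linearIndependent_iff.2 fun g hg i => ?_
  simpa using
    h (Fin.snoc g 0) (by simpa [Fin.sum_univ_castSucc] using hg) i.castSucc (Fin.last m)

theorem eq_neg_sum_castSucc_of_sum_eq_zero (h : ∑ i, v i = 0) :
    v (Fin.last m) = -∑ i : Fin m, v i.castSucc := by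
  rw [Fin.sum_univ_castSucc] at h
  exact eq_neg_of_add_eq_zero_right h

theorem span_range_eq_span_range_castSucc_of_sum_eq_zero (h : ∑ i, v i = 0) :
    Submodule.span R (Set.range v) =
      Submodule.span R (Set.range fun i : Fin m => v i.castSucc) := by
  refine le_antisymm (Submodule.span_le.2 ?_)
    (Submodule.span_mono (Set.range_comp_subset_range _ _))
  rintro _ ⟨i, rfl⟩
  induction i using Fin.lastCases with
  | last =>
    rw [eq_neg_sum_castSucc_of_sum_eq_zero h]
    exact neg_mem (Submodule.sum_mem _ fun i _ => Submodule.subset_span ⟨i, rfl⟩)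
  | cast i => exact Submodule.subset_span ⟨i, rfl⟩
end

theorem Polynomial.coeff_sum_fin_C_mul_X_pow {R : Type*} [Semiring R] {n : ℕ} (c : Fin n → R)
    (k : Fin n) : (∑ i : Fin n, C (c i) * X ^ (i : ℕ)).coeff k = c k := by
  simp only [finsetSum_coeff, coeff_C_mul_X_pow]
  rw [Finset.sum_eq_single k (fun i _ hi => if_neg (Fin.val_injective.ne hi.symm)) (by simp)]
  simp

theorem Module.End.eq_of_sum_smul_pow_apply_eq_zero {V : Type*} [AddCommGroup V] [Module ℚ V]
    {n : ℕ} (hn : n.Prime) (T : Module.End ℚ V) {x : V} (hx : x ≠ 0)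
    (htrace : ∑ k : Fin n, (T ^ (k : ℕ)) x = 0) (c : Fin n → ℚ)
    (hc : ∑ k : Fin n, c k • (T ^ (k : ℕ)) x = 0) (i j : Fin n) : c i = c j := by
  have := Fact.mk hn
  set p : ℚ[X] := ∑ k : Fin n, C (c k) * X ^ (k : ℕ)
  have hp : aeval T p x = 0 := by
    simpa [p, map_sum, Module.End.smul_def] using hc
  have hΦ : aeval T (cyclotomic n ℚ) x = 0 := by
    rw [cyclotomic_prime, ← Fin.sum_univ_eq_sum_range]
    simpa [map_sum] using htrace
  have hdvd : cyclotomic n ℚ ∣ p := by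
    by_contra hndvd
    obtain ⟨a, b, hab⟩ :=
      ((cyclotomic.irreducible_rat hn.pos).coprime_iff_not_dvd).2 hndvd
    apply hx
    simpa [hΦ, hp, Module.End.mul_apply] using congr(aeval T $hab x).symm
  obtain ⟨q, hpq⟩ := hdvd
  have hq0 : q.natDegree = 0 := by
    by_cases hq : q = 0
    · simp [hq]
    have hpdeg : p.natDegree ≤ n - 1 :=
      natDegree_sum_le_of_forall_le _ _ fun k _ =>
        (natDegree_C_mul_X_pow_le _ _).trans (by omega)
    rw [hpq, natDegree_mul (cyclotomic_ne_zero n ℚ) hq, natDegree_cyclotomic,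
      Nat.totient_prime hn] at hpdeg
    omega
  have hcoeff (k : Fin n) : c k = q.coeff 0 := by
    rw [← show p.coeff k = c k from coeff_sum_fin_C_mul_X_pow c k, hpq,
      eq_C_of_natDegree_eq_zero hq0, coeff_mul_C, cyclotomic_prime, finsetSum_coeff]
    simp
  rw [hcoeff i, hcoeff j]

theorem Polynomial.coeff_zero_ne_zero_of_irreducible {K : Type*} [Field K] {f : K[X]}
    (hirr : Irreducible f) (hdeg : f.natDegree ≠ 1) : f.coeff 0 ≠ 0 := fun h =>
  hdeg <| by
    rw [← natDegree_X (R := K), natDegree_eq_of_degree_eq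
      (degree_eq_degree_of_associated (irreducible_X.associated_of_dvd hirr (X_dvd_iff.2 h)))]

theorem Polynomial.sum_roots_eq_zero_of_nextCoeff_eq_zero {K : Type*} [Field K] {f : K[X]}
    (hsplit : f.Splits) (hnext : f.nextCoeff = 0) : f.roots.sum = 0 := by
  rcases eq_or_ne f 0 with rfl | hf
  · simp
  simpa [hnext, leadingCoeff_ne_zero.2 hf] using
    hsplit.nextCoeff_eq_neg_sum_roots_mul_leadingCoeff

theorem Polynomial.exists_aroots_eq_ofFn_pow_apply {F : Type*} [Field F] [CharZero F] {f : F[X]}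
    (hirr : Irreducible f) (hprime : f.natDegree.Prime) :
    ∃ (σ : f.SplittingField ≃ₐ[F] f.SplittingField) (x : f.SplittingField),
      f.aroots f.SplittingField =
        (List.ofFn fun k : Fin f.natDegree => (σ ^ (k : ℕ)) x : Multiset _) := by
  have := Fact.mk hprime
  obtain ⟨σ, hσ⟩ :
      ∃ σ : f.SplittingField ≃ₐ[F] f.SplittingField, orderOf σ = f.natDegree :=
    exists_prime_orderOf_dvd_card' f.natDegree (Gal.prime_degree_dvd_card hirr hprime)
  obtain ⟨x, hx, hσx⟩ : ∃ x ∈ f.rootSet f.SplittingField, σ x ≠ x := by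
    by_contra! h
    have : σ = 1 := Gal.ext f (σ := σ) (τ := 1) h
    exact hprime.one_lt.ne' (hσ ▸ this ▸ orderOf_one)
  have hperiod : Function.minimalPeriod σ x = f.natDegree := by
    refine Function.minimalPeriod_eq_prime ?_ hσx
    rw [Function.IsPeriodicPt, Function.IsFixedPt, ← AlgEquiv.coe_pow, ← hσ,
      pow_orderOf_eq_one]
    rfl
  have hinj : Function.Injective fun k : Fin f.natDegree => (σ ^ (k : ℕ)) x := by
    intro i j hij
    simp only [AlgEquiv.coe_pow] at hij
    exact Fin.ext (Function.iterate_injOn_Iio_minimalPeriod (hperiod.symm ▸ i.isLt)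
      (hperiod.symm ▸ j.isLt) hij)
  have hroot (k : ℕ) : (σ ^ k) x ∈ f.aroots f.SplittingField := by
    rw [mem_rootSet'] at hx
    rw [mem_aroots', aeval_algHom_apply, hx.2, map_zero]
    exact ⟨hx.1, rfl⟩
  -- The `n` distinct roots `σ^k x` exhaust the at most `n` roots of `f`.
  refine ⟨σ, x, (Multiset.eq_of_le_of_card_le ?_ ?_).symm⟩
  · rw [Multiset.le_iff_subset (Multiset.coe_nodup.2 (List.nodup_ofFn.2 hinj))]
    intro y hy
    obtain ⟨k, rfl⟩ := List.mem_ofFn.1 (Multiset.mem_coe.1 hy)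
    exact hroot k
  · simpa using (card_roots' _).trans natDegree_map_le

theorem Polynomial.eq_of_sum_smul_aroots_eq_zero {f : ℚ[X]} (hirr : Irreducible f)
    (hprime : f.natDegree.Prime) (hnext : f.nextCoeff = 0) {L : Type*} [Field L] [Algebra ℚ L]
    (hsplit : (f.map (algebraMap ℚ L)).Splits) (c : L → ℚ)
    (hc : ((f.aroots L).map fun y => c y • y).sum = 0) {y z : L} (hy : y ∈ f.aroots L)
    (hz : z ∈ f.aroots L) : c y = c z := by
  obtain ⟨σ, x, hrootsK⟩ := exists_aroots_eq_ofFn_pow_apply hirr hprime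
  set ψ := SplittingField.lift f hsplit
  have hrootsL :
      f.aroots L = (List.ofFn fun k : Fin f.natDegree => ψ ((σ ^ (k : ℕ)) x) : _) := by
    rw [aroots_def, ← ψ.comp_algebraMap, ← map_map, (SplittingField.splits f).roots_map,
      ← aroots_def, hrootsK, Multiset.map_coe, List.map_ofFn]
    rfl
  have hx : x ≠ 0 := by
    have hxroot : x ∈ (List.ofFn fun k : Fin f.natDegree => (σ ^ (k : ℕ)) x : Multiset _) :=
      List.mem_ofFn.2 ⟨⟨0, hprime.pos⟩, rfl⟩
    rw [← hrootsK, mem_aroots] at hxroot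
    rintro rfl
    rw [← coeff_zero_eq_aeval_zero', FaithfulSMul.algebraMap_eq_zero_iff] at hxroot
    exact coeff_zero_ne_zero_of_irreducible hirr hprime.one_lt.ne' hxroot.2
  have htrace : ∑ k : Fin f.natDegree, (σ.toLinearMap ^ (k : ℕ)) x = 0 := by
    have := sum_roots_eq_zero_of_nextCoeff_eq_zero (SplittingField.splits f)
      (by rw [nextCoeff_map (algebraMap ℚ _).injective, hnext, map_zero])
    simpa [← aroots_def, hrootsK, ← AlgEquiv.pow_toLinearMap, List.sum_ofFn] using this
  have hrel : ∑ k : Fin f.natDegree,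
      c (ψ ((σ ^ (k : ℕ)) x)) • (σ.toLinearMap ^ (k : ℕ)) x = 0 := by
    apply ψ.injective
    simpa [hrootsL, ← AlgEquiv.pow_toLinearMap, List.sum_ofFn] using hc
  rw [hrootsL] at hy hz
  obtain ⟨i, rfl⟩ := List.mem_ofFn.1 hy
  obtain ⟨j, rfl⟩ := List.mem_ofFn.1 hz
  exact Module.End.eq_of_sum_smul_pow_apply_eq_zero hprime _ hx htrace _ hrel i j

theorem Polynomial.eq_of_sum_smul_eq_zero_of_aroots_eq_ofFn {f : ℚ[X]} (hirr : Irreducible f)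
    (hprime : f.natDegree.Prime) (hnext : f.nextCoeff = 0) {L : Type*} [Field L] [Algebra ℚ L]
    {α : Fin f.natDegree → L} (hroots : f.aroots L = (List.ofFn α : Multiset L))
    (c : Fin f.natDegree → ℚ) (hc : ∑ i, c i • α i = 0) (i j : Fin f.natDegree) :
    c i = c j := by
  have : Nonempty (Fin f.natDegree) := ⟨i⟩
  have hαinj : Function.Injective α := by
    rw [← List.nodup_ofFn, ← Multiset.coe_nodup, ← hroots]
    exact nodup_roots hirr.separable.map
  have hsplit : (f.map (algebraMap ℚ L)).Splits :=
    splits_iff_card_roots.2 (by simp [hroots, natDegree_map])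
  have hmem (k : Fin f.natDegree) : α k ∈ f.aroots L := by
    rw [hroots]
    exact List.mem_ofFn.2 ⟨k, rfl⟩
  simpa [Function.leftInverse_invFun hαinj _] using
    eq_of_sum_smul_aroots_eq_zero hirr hprime hnext hsplit (fun y => c (Function.invFun α y))
      (by simpa [hroots, List.sum_ofFn, Function.leftInverse_invFun hαinj _]) (hmem i) (hmem j)

/-- n prime, f monic irreducible of degree n with roots α₁,...,αₙ and
a_{n-1} = 0. Then α₁,...,α_{n-1} are linearly independent over ℚ,
αₙ = -(α₁ + ... + α_{n-1}), and the ℚ-span of the roots has dimension n-1. -/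
theorem stmt_1 (n : ℕ) (hn : n.Prime) (f : Polynomial ℚ) (hirr : Irreducible f)
    (hdeg : f.natDegree = n) (α : Fin n → ℂ)
    (hroots : (f.map (algebraMap ℚ ℂ)).roots = (List.ofFn α : Multiset ℂ))
    (ha : f.coeff (n - 1) = 0) :
    LinearIndependent ℚ (fun i : Fin (n - 1) => α (Fin.castLE (Nat.sub_le n 1) i)) ∧
    α ⟨n - 1, by have := hn.one_lt; omega⟩ =
      -∑ i : Fin (n - 1), α (Fin.castLE (Nat.sub_le n 1) i) ∧
    Module.finrank ℚ (Submodule.span ℚ (Set.range α)) = n - 1 := by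
  have hnext : f.nextCoeff = 0 := by rw [nextCoeff_of_natDegree_pos (hdeg ▸ hn.pos), hdeg, ha]
  have hsum : ∑ i, α i = 0 := by
    simpa [hroots, List.sum_ofFn] using sum_roots_eq_zero_of_nextCoeff_eq_zero
      (IsAlgClosed.splits (f.map (algebraMap ℚ ℂ)))
      (by rw [nextCoeff_map (algebraMap ℚ ℂ).injective, hnext, map_zero])
  have hrel (c : Fin n → ℚ) (hc : ∑ i, c i • α i = 0) (i j : Fin n) : c i = c j := by
    subst hdeg
    exact eq_of_sum_smul_eq_zero_of_aroots_eq_ofFn hirr hn hnext hroots c hc i j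
  obtain ⟨m, rfl⟩ := Nat.exists_eq_add_one_of_ne_zero hn.ne_zero
  -- `m + 1 - 1` reduces to `m`, so `Fin.castLE` becomes `Fin.castSucc` definitionally.
  change LinearIndependent ℚ (fun i : Fin m => α i.castSucc) ∧
    α (Fin.last m) = -∑ i : Fin m, α i.castSucc ∧
    Module.finrank ℚ (Submodule.span ℚ (Set.range α)) = m
  have hli := linearIndependent_castSucc_of_forall_eq hrel
  refine ⟨hli, eq_neg_sum_castSucc_of_sum_eq_zero hsum, ?_⟩
  rw [span_range_eq_span_range_castSucc_of_sum_eq_zero hsum, finrank_span_eq_card hli,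
    Fintype.card_fin]
end

section
/- Let f(x) = a₂x² + a₁x + a₀ ∈ ℤ[x] be an irreducible quadratic with real roots α₁ > α₂ and discriminant D = a₁² - 4a₂a₀ > 0. The lattice L_f = span_ℤ{(α₁,α₂), (α₂,α₁)} ⊂ ℝ² is well-rounded (i.e., contains two linearly independent vectors of minimal norm) if and only if a₁² ≥ 2·max{3a₀a₂, -a₀a₂}. -/
/-!
Both generators have squared length `N = α₁² + α₂²` and `⟪v₁, v₂⟫ = 2α₁α₂`, so
`‖m v₁ + n v₂‖² = N (m² + n²) + 4α₁α₂ m n`. If `4|α₁α₂| ≤ N` this form is at least `N` at every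
nonzero `(m, n)`, so `v₁` and `v₂` themselves are independent minimal vectors. Otherwise either
`v₂ = ±v₁` and the lattice has rank one, or `d = v₁ ∓ v₂` is strictly shorter than every nonzero
lattice vector other than `±d`; either way all minimal vectors are collinear. Since `a₂ (α₁ + α₂) = -a₁` and
`a₂ α₁α₂ = a₀`, multiplying `4|α₁α₂| ≤ α₁² + α₂²` by `a₂²` turns it into
`4|a₀a₂| ≤ a₁² - 2a₀a₂`, which is the stated condition.
-/

open Submodule
open scoped RealInnerProductSpace

def gramForm (N B : ℝ) (m n : ℤ) : ℝ := m ^ 2 * N + 2 * m * n * B + n ^ 2 * N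

lemma one_le_sq_add_mul_add_sq {m n : ℤ} (h : m ≠ 0 ∨ n ≠ 0) : 1 ≤ m ^ 2 + m * n + n ^ 2 := by
  rcases h with h | h
  · nlinarith [sq_nonneg (m + 2 * n), sq_pos_of_ne_zero h]
  · nlinarith [sq_nonneg (2 * m + n), sq_pos_of_ne_zero h]

lemma le_gramForm {N B : ℝ} (hB : 2 * |B| ≤ N) {m n : ℤ} (h : m ≠ 0 ∨ n ≠ 0) :
    N ≤ gramForm N B m n := by
  have hN : 0 ≤ N := le_trans (by positivity) hB
  obtain ⟨hB₁, hB₂⟩ := abs_le.mp (le_div_iff₀' two_pos |>.mpr hB)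
  rw [gramForm]
  rcases le_total 0 ((m : ℝ) * n) with hmn | hmn
  · have : (1 : ℝ) ≤ m ^ 2 + m * (-n) + (-n) ^ 2 := by
      exact_mod_cast one_le_sq_add_mul_add_sq (n := -n) (by simpa using h)
    nlinarith [mul_le_mul_of_nonneg_left hB₁ hmn]
  · have : (1 : ℝ) ≤ m ^ 2 + m * n + n ^ 2 := by exact_mod_cast one_le_sq_add_mul_add_sq h
    nlinarith [mul_le_mul_of_nonpos_left hB₂ hmn]

lemma eq_one_neg_one_of_gramForm_le {N B : ℝ} (h₁ : N < 2 * B) (h₂ : B < N) {m n : ℤ}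
    (h : m ≠ 0 ∨ n ≠ 0) (hQ : gramForm N B m n ≤ 2 * N - 2 * B) :
    (m = 1 ∧ n = -1) ∨ (m = -1 ∧ n = 1) := by
  rw [gramForm] at hQ
  rcases lt_trichotomy (m * n) (-1) with hmn | hmn | hmn
  · have hmn' : (m : ℝ) * n ≤ -2 := by exact_mod_cast (by omega : m * n ≤ -2)
    -- the form equals (m + n)² N - 2mn (N - B)
    nlinarith [mul_nonneg (sq_nonneg ((m : ℝ) + n)) (by linarith : 0 ≤ N)]
  · rcases Int.eq_one_or_neg_one_of_mul_eq_neg_one hmn with rfl | rfl <;> omega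
  · have hmn' : (0 : ℝ) ≤ m * n := by exact_mod_cast (by omega : 0 ≤ m * n)
    have : (1 : ℝ) ≤ m ^ 2 + m * n + n ^ 2 := by exact_mod_cast one_le_sq_add_mul_add_sq h
    nlinarith

lemma Submodule.span_pair_neg {R M : Type*} [Ring R] [AddCommGroup M] [Module R M] (x y : M) :
    span R {x, -y} = span R {x, y} := by
  rw [span_insert, span_insert, ← Set.neg_singleton, span_neg]

section NormedSpace

variable {E : Type*} [NormedAddCommGroup E] [NormedSpace ℝ E]

def IsWellRounded (L : Submodule ℤ E) : Prop :=
  ∃ u w : E, u ∈ L ∧ w ∈ L ∧ LinearIndependent ℝ ![u, w] ∧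
    (∀ z ∈ L, z ≠ 0 → ‖u‖ ≤ ‖z‖) ∧ (∀ z ∈ L, z ≠ 0 → ‖w‖ ≤ ‖z‖)

lemma not_isWellRounded_of_minimal_eq_or_eq_neg {L : Submodule ℤ E} (e : E)
    (h : ∀ z ∈ L, z ≠ 0 → (∀ y ∈ L, y ≠ 0 → ‖z‖ ≤ ‖y‖) → z = e ∨ z = -e) :
    ¬IsWellRounded L := by
  rintro ⟨u, w, hu, hw, hli, humin, hwmin⟩
  have hu' := h u hu (hli.ne_zero 0) humin
  have hw' := h w hw (hli.ne_zero 1) hwmin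
  rw [LinearIndependent.pair_iff] at hli
  rcases hu' with rfl | rfl <;> rcases hw' with rfl | rfl
  · simpa using hli 1 (-1) (by module)
  · simpa using hli 1 1 (by module)
  · simpa using hli 1 1 (by module)
  · simpa using hli 1 (-1) (by module)

lemma eq_or_eq_neg_of_mem_span_singleton {e z : E} (hz : z ∈ span ℤ {e}) (hz0 : z ≠ 0)
    (hle : ‖z‖ ≤ ‖e‖) : z = e ∨ z = -e := by
  obtain ⟨k, rfl⟩ := mem_span_singleton.mp hz
  have hk : k ≠ 0 := by rintro rfl; simp at hz0
  have he : 0 < ‖e‖ := norm_pos_iff.mpr (by rintro rfl; simp at hz0)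
  have hk1 : |k| ≤ 1 := by
    rw [norm_zsmul ℝ, Real.norm_eq_abs, ← Int.cast_abs] at hle
    exact_mod_cast (mul_le_iff_le_one_left he).mp hle
  obtain rfl | rfl : k = 1 ∨ k = -1 := by rw [abs_le] at hk1; omega
  · simp
  · simp

end NormedSpace

section InnerProductSpace

variable {E : Type*} [NormedAddCommGroup E] [InnerProductSpace ℝ E]

lemma norm_zsmul_add_zsmul_sq_of_norm_eq {v₁ v₂ : E} (hnorm : ‖v₁‖ = ‖v₂‖) (m n : ℤ) :
    ‖m • v₁ + n • v₂‖ ^ 2 = gramForm (‖v₁‖ ^ 2) ⟪v₁, v₂⟫ m n := by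
  rw [gramForm, ← Int.cast_smul_eq_zsmul ℝ m, ← Int.cast_smul_eq_zsmul ℝ n, norm_add_sq_real,
    norm_smul, norm_smul, real_inner_smul_left, real_inner_smul_right, Real.norm_eq_abs,
    Real.norm_eq_abs, mul_pow, mul_pow, sq_abs, sq_abs, hnorm]
  ring

lemma not_isWellRounded_span_pair {v₁ v₂ : E} (hnorm : ‖v₁‖ = ‖v₂‖)
    (h : ‖v₁‖ ^ 2 < 2 * ⟪v₁, v₂⟫) : ¬IsWellRounded (span ℤ {v₁, v₂}) := by
  by_cases hd : v₁ = v₂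
  · subst hd
    have hv₁ : v₁ ≠ 0 := by rintro rfl; simp at h
    rw [Set.pair_eq_singleton]
    exact not_isWellRounded_of_minimal_eq_or_eq_neg v₁ fun z hz hz0 hmin =>
      eq_or_eq_neg_of_mem_span_singleton hz hz0 (hmin v₁ (mem_span_singleton_self v₁) hv₁)
  · have hdL : v₁ - v₂ ∈ span ℤ {v₁, v₂} :=
      sub_mem (subset_span (by simp)) (subset_span (by simp))
    have hd0 : v₁ - v₂ ≠ 0 := sub_ne_zero.mpr hd
    have hdnorm : ‖v₁ - v₂‖ ^ 2 = 2 * ‖v₁‖ ^ 2 - 2 * ⟪v₁, v₂⟫ := by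
      rw [norm_sub_sq_real, ← hnorm]; ring
    have hlt : ⟪v₁, v₂⟫ < ‖v₁‖ ^ 2 := by
      have := pow_pos (norm_pos_iff.mpr hd0) 2
      linarith
    refine not_isWellRounded_of_minimal_eq_or_eq_neg (v₁ - v₂) fun z hz hz0 hmin => ?_
    obtain ⟨m, n, rfl⟩ := mem_span_pair.mp hz
    have hmn : m ≠ 0 ∨ n ≠ 0 := by
      by_contra! hmn; obtain ⟨rfl, rfl⟩ := hmn; simp at hz0
    have hQ := pow_le_pow_left₀ (norm_nonneg _) (hmin _ hdL hd0) 2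
    rw [hdnorm, norm_zsmul_add_zsmul_sq_of_norm_eq hnorm] at hQ
    rcases eq_one_neg_one_of_gramForm_le h hlt hmn hQ with ⟨rfl, rfl⟩ | ⟨rfl, rfl⟩
    · left; module
    · right; module

lemma linearIndependent_pair_of_two_mul_abs_inner_le {v₁ v₂ : E} (hv₁ : v₁ ≠ 0)
    (hnorm : ‖v₁‖ = ‖v₂‖) (h : 2 * |⟪v₁, v₂⟫| ≤ ‖v₁‖ ^ 2) : LinearIndependent ℝ ![v₁, v₂] := by
  rw [LinearIndependent.pair_iff]
  intro s t hst
  have h₁ : s * ‖v₁‖ ^ 2 + t * ⟪v₁, v₂⟫ = 0 := by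
    simpa [inner_add_right, real_inner_smul_right] using congrArg (⟪v₁, ·⟫) hst
  have h₂ : s * ⟪v₁, v₂⟫ + t * ‖v₁‖ ^ 2 = 0 := by
    simpa [inner_add_right, real_inner_smul_right, real_inner_comm, hnorm] using
      congrArg (⟪v₂, ·⟫) hst
  have hgram : 0 < ‖v₁‖ ^ 2 * ‖v₁‖ ^ 2 - ⟪v₁, v₂⟫ ^ 2 := by
    have := pow_pos (norm_pos_iff.mpr hv₁) 2
    nlinarith [sq_abs ⟪v₁, v₂⟫, abs_nonneg ⟪v₁, v₂⟫]
  constructor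
  · exact (mul_eq_zero.mp (by linear_combination ‖v₁‖ ^ 2 * h₁ - ⟪v₁, v₂⟫ * h₂ :
      s * (‖v₁‖ ^ 2 * ‖v₁‖ ^ 2 - ⟪v₁, v₂⟫ ^ 2) = 0)).resolve_right hgram.ne'
  · exact (mul_eq_zero.mp (by linear_combination ‖v₁‖ ^ 2 * h₂ - ⟪v₁, v₂⟫ * h₁ :
      t * (‖v₁‖ ^ 2 * ‖v₁‖ ^ 2 - ⟪v₁, v₂⟫ ^ 2) = 0)).resolve_right hgram.ne'

lemma isWellRounded_span_pair {v₁ v₂ : E} (hv₁ : v₁ ≠ 0) (hnorm : ‖v₁‖ = ‖v₂‖)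
    (h : 2 * |⟪v₁, v₂⟫| ≤ ‖v₁‖ ^ 2) : IsWellRounded (span ℤ {v₁, v₂}) := by
  have hmin : ∀ z ∈ span ℤ {v₁, v₂}, z ≠ 0 → ‖v₁‖ ≤ ‖z‖ := by
    intro z hz hz0
    obtain ⟨m, n, rfl⟩ := mem_span_pair.mp hz
    have hmn : m ≠ 0 ∨ n ≠ 0 := by
      by_contra! hmn; obtain ⟨rfl, rfl⟩ := hmn; simp at hz0
    refine le_of_pow_le_pow_left₀ two_ne_zero (norm_nonneg _) ?_
    rw [norm_zsmul_add_zsmul_sq_of_norm_eq hnorm]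
    exact le_gramForm h hmn
  exact ⟨v₁, v₂, subset_span (by simp), subset_span (by simp),
    linearIndependent_pair_of_two_mul_abs_inner_le hv₁ hnorm h, hmin, hnorm ▸ hmin⟩

theorem isWellRounded_span_pair_iff {v₁ v₂ : E} (hv₁ : v₁ ≠ 0) (hnorm : ‖v₁‖ = ‖v₂‖) :
    IsWellRounded (span ℤ {v₁, v₂}) ↔ 2 * |⟪v₁, v₂⟫| ≤ ‖v₁‖ ^ 2 := by
  refine ⟨fun hL => ?_, isWellRounded_span_pair hv₁ hnorm⟩
  by_contra! h
  rcases abs_cases ⟪v₁, v₂⟫ with ⟨habs, _⟩ | ⟨habs, _⟩ <;> rw [habs] at h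
  · exact not_isWellRounded_span_pair hnorm h hL
  · refine not_isWellRounded_span_pair (v₁ := v₁) (v₂ := -v₂) (by rwa [norm_neg]) ?_ ?_
    · rwa [inner_neg_right]
    · rwa [span_pair_neg]

end InnerProductSpace

lemma vieta_of_quadratic_formula {a₂ a₁ a₀ s α₁ α₂ : ℝ} (ha₂ : a₂ ≠ 0)
    (hs : s ^ 2 = discrim a₂ a₁ a₀) (hα₁ : α₁ = (-a₁ + s) / (2 * a₂))
    (hα₂ : α₂ = (-a₁ - s) / (2 * a₂)) :
    a₂ * (α₁ + α₂) = -a₁ ∧ a₂ * (α₁ * α₂) = a₀ := by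
  subst hα₁ hα₂
  rw [discrim] at hs
  constructor
  · field_simp; ring
  · field_simp; linear_combination -hs

lemma four_mul_abs_mul_le_sq_add_sq_iff {a₂ a₁ a₀ : ℤ} {α₁ α₂ : ℝ} (ha₂ : a₂ ≠ 0)
    (hsum : a₂ * (α₁ + α₂) = -a₁) (hprod : a₂ * (α₁ * α₂) = a₀) :
    4 * |α₁ * α₂| ≤ α₁ ^ 2 + α₂ ^ 2 ↔ 2 * max (3 * a₀ * a₂) (-(a₀ * a₂)) ≤ a₁ ^ 2 := by
  have hscale : (0 : ℝ) < (a₂ : ℝ) ^ 2 := by positivity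
  have hlhs : (a₂ : ℝ) ^ 2 * (4 * |α₁ * α₂|) = 4 * |(a₀ : ℝ) * a₂| := by
    simp only [← hprod, abs_mul, ← sq_abs (a₂ : ℝ)]; ring
  have hrhs : (a₂ : ℝ) ^ 2 * (α₁ ^ 2 + α₂ ^ 2) = a₁ ^ 2 - 2 * (a₀ * a₂) := by
    linear_combination (a₂ * (α₁ + α₂) - a₁) * hsum - 2 * a₂ * hprod
  rw [← mul_le_mul_iff_right₀ hscale, hlhs, hrhs]
  norm_cast
  rw [mul_assoc 3]
  rcases abs_cases (a₀ * a₂) with ⟨habs, _⟩ | ⟨habs, _⟩ <;> rw [habs] <;> omega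

lemma norm_sq_pair (a b : ℝ) :
    ‖(WithLp.equiv 2 (Fin 2 → ℝ)).symm ![a, b]‖ ^ 2 = a ^ 2 + b ^ 2 := by
  simp [EuclideanSpace.norm_sq_eq, Fin.sum_univ_two]

lemma inner_pair_swap (a b : ℝ) :
    ⟪(WithLp.equiv 2 (Fin 2 → ℝ)).symm ![a, b], (WithLp.equiv 2 (Fin 2 → ℝ)).symm ![b, a]⟫ =
      2 * (a * b) := by
  simp [PiLp.inner_apply, Fin.sum_univ_two]; ring

theorem stmt_5_general (a₂ a₁ a₀ : ℤ) (ha₂ : a₂ ≠ 0)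
    (D : ℤ) (hD : D = a₁ ^ 2 - 4 * a₂ * a₀) (hDpos : 0 < D)
    (α₁ α₂ : ℝ) (hα₁ : α₁ = (-a₁ + Real.sqrt D) / (2 * a₂))
    (hα₂ : α₂ = (-a₁ - Real.sqrt D) / (2 * a₂)) (hord : α₂ < α₁)
    (v₁ v₂ : EuclideanSpace ℝ (Fin 2))
    (hv₁ : v₁ = (WithLp.equiv 2 (Fin 2 → ℝ)).symm ![α₁, α₂])
    (hv₂ : v₂ = (WithLp.equiv 2 (Fin 2 → ℝ)).symm ![α₂, α₁])
    (L : Submodule ℤ (EuclideanSpace ℝ (Fin 2))) (hL : L = Submodule.span ℤ {v₁, v₂}) :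
    (∃ u w : EuclideanSpace ℝ (Fin 2), u ∈ L ∧ w ∈ L ∧ LinearIndependent ℝ ![u, w] ∧
      (∀ z ∈ L, z ≠ 0 → ‖u‖ ≤ ‖z‖) ∧ (∀ z ∈ L, z ≠ 0 → ‖w‖ ≤ ‖z‖)) ↔
    a₁ ^ 2 ≥ 2 * max (3 * a₀ * a₂) (-(a₀ * a₂)) := by
  subst hv₁ hv₂ hL
  have hdiscrim : √(D : ℝ) ^ 2 = discrim (a₂ : ℝ) a₁ a₀ := by
    rw [Real.sq_sqrt (by exact_mod_cast hDpos.le), hD, discrim]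
    push_cast
    ring
  obtain ⟨hsum, hprod⟩ := vieta_of_quadratic_formula (by exact_mod_cast ha₂) hdiscrim hα₁ hα₂
  have hv₁ : (WithLp.equiv 2 (Fin 2 → ℝ)).symm ![α₁, α₂] ≠ 0 := fun h => by
    have h' := norm_sq_pair α₁ α₂
    rw [h, norm_zero] at h'
    nlinarith [mul_pos (sub_pos.mpr hord) (sub_pos.mpr hord)]
  have hnorm : ‖(WithLp.equiv 2 (Fin 2 → ℝ)).symm ![α₁, α₂]‖ =
      ‖(WithLp.equiv 2 (Fin 2 → ℝ)).symm ![α₂, α₁]‖ := by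
    rw [← sq_eq_sq₀ (norm_nonneg _) (norm_nonneg _), norm_sq_pair, norm_sq_pair, add_comm]
  change IsWellRounded _ ↔ _
  rw [isWellRounded_span_pair_iff hv₁ hnorm, inner_pair_swap, norm_sq_pair, abs_mul, abs_two,
    ← mul_assoc, show (2 : ℝ) * 2 = 4 by norm_num]
  exact four_mul_abs_mul_le_sq_add_sq_iff ha₂ hsum hprod

/-- For an irreducible quadratic f = a₂x² + a₁x + a₀ ∈ ℤ[x] with D > 0 and
real roots α₁ > α₂, the lattice L_f = span_ℤ{(α₁,α₂),(α₂,α₁)} ⊂ ℝ² is well-rounded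
(contains two linearly independent minimal vectors) iff a₁² ≥ 2·max{3a₀a₂, -a₀a₂}. -/
theorem stmt_5 (a₂ a₁ a₀ : ℤ) (ha₂ : a₂ ≠ 0)
    (hirr : Irreducible (Polynomial.C (a₂ : ℚ) * Polynomial.X ^ 2 +
      Polynomial.C (a₁ : ℚ) * Polynomial.X + Polynomial.C (a₀ : ℚ)))
    (D : ℤ) (hD : D = a₁ ^ 2 - 4 * a₂ * a₀) (hDpos : 0 < D)
    (α₁ α₂ : ℝ) (hα₁ : α₁ = (-a₁ + Real.sqrt D) / (2 * a₂))
    (hα₂ : α₂ = (-a₁ - Real.sqrt D) / (2 * a₂)) (hord : α₂ < α₁)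
    (v₁ v₂ : EuclideanSpace ℝ (Fin 2))
    (hv₁ : v₁ = (WithLp.equiv 2 (Fin 2 → ℝ)).symm ![α₁, α₂])
    (hv₂ : v₂ = (WithLp.equiv 2 (Fin 2 → ℝ)).symm ![α₂, α₁])
    (L : Submodule ℤ (EuclideanSpace ℝ (Fin 2))) (hL : L = Submodule.span ℤ {v₁, v₂}) :
    (∃ u w : EuclideanSpace ℝ (Fin 2), u ∈ L ∧ w ∈ L ∧ LinearIndependent ℝ ![u, w] ∧
      (∀ z ∈ L, z ≠ 0 → ‖u‖ ≤ ‖z‖) ∧ (∀ z ∈ L, z ≠ 0 → ‖w‖ ≤ ‖z‖)) ↔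
    a₁ ^ 2 ≥ 2 * max (3 * a₀ * a₂) (-(a₀ * a₂)) :=
  stmt_5_general a₂ a₁ a₀ ha₂ D hD hDpos α₁ α₂ hα₁ hα₂ hord v₁ v₂ hv₁ hv₂ L hL
end

section
/- Let α₁, α₂, α₃ be real numbers with A = α₁²+α₂²+α₃² > 0 and B = α₁α₂+α₁α₃+α₂α₃ satisfying |B| < A/3. Then for all integers c₁, c₂, c₃ with (c₁,c₂,c₃) not equal to any of (0,0,0), ±(1,0,0), ±(0,1,0), ±(0,0,1), the quantity (c₁²+c₂²+c₃²)A + 2(c₁c₂+c₂c₃+c₁c₃)B is strictly greater than A. -/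
/-!
With `N = c₁² + c₂² + c₃²` and `P = c₁c₂ + c₂c₃ + c₁c₃`, the quantity minus `A` is
`(N - 1)(A - 3|B|) + |B|(3(N - 1) - 2|P|) + 2(|P||B| + PB)`.
Away from `0` and `±eᵢ` we have `N ≥ 2`, so the first summand is positive, and for every nonzero
integer vector `2|P| ≤ 3(N - 1)`: when `N ≥ 3` this follows from `|P| ≤ N`, and when `N ≤ 2` all
coordinates lie in `{-1, 0, 1}`.
-/

lemma abs_lt_two_of_sum_sq_le_two {x y z : ℤ} (h : x ^ 2 + y ^ 2 + z ^ 2 ≤ 2) :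
    |x| < 2 ∧ |y| < 2 ∧ |z| < 2 := by
  refine ⟨abs_lt_of_sq_lt_sq ?_ zero_le_two, abs_lt_of_sq_lt_sq ?_ zero_le_two,
    abs_lt_of_sq_lt_sq ?_ zero_le_two⟩ <;> nlinarith [sq_nonneg x, sq_nonneg y, sq_nonneg z]

lemma eq_zero_or_eq_single_of_sum_sq_le_one {x y z : ℤ} (h : x ^ 2 + y ^ 2 + z ^ 2 ≤ 1) :
    (x, y, z) = (0, 0, 0) ∨ ∃ ε : ℤ, (ε = 1 ∨ ε = -1) ∧
      ((x, y, z) = (ε, 0, 0) ∨ (x, y, z) = (0, ε, 0) ∨ (x, y, z) = (0, 0, ε)) := by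
  have hbound := abs_lt_two_of_sum_sq_le_two (h.trans one_le_two)
  simp only [abs_lt] at hbound
  obtain ⟨⟨hx₁, hx₂⟩, ⟨hy₁, hy₂⟩, ⟨hz₁, hz₂⟩⟩ := hbound
  interval_cases x <;> interval_cases y <;> interval_cases z <;> simp_all

lemma two_mul_abs_le_of_ne_zero {x y z : ℤ} (h : (x, y, z) ≠ (0, 0, 0)) :
    2 * |x * y + y * z + x * z| ≤ 3 * (x ^ 2 + y ^ 2 + z ^ 2 - 1) := by
  by_cases hN : 3 ≤ x ^ 2 + y ^ 2 + z ^ 2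
  · have : |x * y + y * z + x * z| ≤ x ^ 2 + y ^ 2 + z ^ 2 := abs_le.mpr
      ⟨by nlinarith [sq_nonneg (x + y), sq_nonneg (y + z), sq_nonneg (x + z)],
       by nlinarith [sq_nonneg (x - y), sq_nonneg (y - z), sq_nonneg (x - z)]⟩
    linarith
  · have hbound := abs_lt_two_of_sum_sq_le_two (by omega : x ^ 2 + y ^ 2 + z ^ 2 ≤ 2)
    simp only [abs_lt] at hbound
    obtain ⟨⟨hx₁, hx₂⟩, ⟨hy₁, hy₂⟩, ⟨hz₁, hz₂⟩⟩ := hbound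
    interval_cases x <;> interval_cases y <;> interval_cases z <;> simp_all

lemma lt_mul_add_two_mul_mul_of_abs_lt_div_three {A B N P : ℝ} (hB : |B| < A / 3)
    (hN : 2 ≤ N) (hP : 2 * |P| ≤ 3 * (N - 1)) : A < N * A + 2 * P * B := by
  have h₁ : 0 < (N - 1) * (A - 3 * |B|) := mul_pos (by linarith) (by linarith)
  have h₂ : 0 ≤ |B| * (3 * (N - 1) - 2 * |P|) := mul_nonneg (abs_nonneg B) (by linarith)
  have h₃ : 0 ≤ |P| * |B| + P * B := by
    rw [← abs_mul]
    exact neg_le_iff_add_nonneg'.mp (neg_abs_le _)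
  linear_combination h₁ + h₂ + 2 * h₃

theorem stmt_10_general (A B : ℝ)
    (hBlt : |B| < A / 3)
    (c₁ c₂ c₃ : ℤ)
    (h : ∀ ε : ℤ, ε = 1 ∨ ε = -1 →
      (c₁, c₂, c₃) ≠ (0, 0, 0) ∧ (c₁, c₂, c₃) ≠ (ε, 0, 0) ∧
      (c₁, c₂, c₃) ≠ (0, ε, 0) ∧ (c₁, c₂, c₃) ≠ (0, 0, ε)) :
    A < ((c₁ : ℝ) ^ 2 + c₂ ^ 2 + c₃ ^ 2) * A +
      2 * ((c₁ : ℝ) * c₂ + c₂ * c₃ + c₁ * c₃) * B := by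
  have hc₀ := (h 1 (Or.inl rfl)).1
  have hN : 2 ≤ c₁ ^ 2 + c₂ ^ 2 + c₃ ^ 2 := by
    by_contra! hN
    rcases eq_zero_or_eq_single_of_sum_sq_le_one
        (by omega : c₁ ^ 2 + c₂ ^ 2 + c₃ ^ 2 ≤ 1) with h₀ | ⟨ε, hε, h₁ | h₂ | h₃⟩
    · exact hc₀ h₀
    · exact (h ε hε).2.1 h₁
    · exact (h ε hε).2.2.1 h₂
    · exact (h ε hε).2.2.2 h₃
  have hP := two_mul_abs_le_of_ne_zero hc₀
  exact lt_mul_add_two_mul_mul_of_abs_lt_div_three hBlt (by exact_mod_cast hN)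
    (by exact_mod_cast hP)

/-- If A = α₁²+α₂²+α₃² > 0 and |B| < A/3 where B = α₁α₂+α₁α₃+α₂α₃, then
for all integer triples (c₁,c₂,c₃) other than (0,0,0) and ±standard basis vectors,
(c₁²+c₂²+c₃²)A + 2(c₁c₂+c₂c₃+c₁c₃)B > A. -/
theorem stmt_10 (α₁ α₂ α₃ : ℝ) (A B : ℝ)
    (hA : A = α₁ ^ 2 + α₂ ^ 2 + α₃ ^ 2) (hApos : 0 < A)
    (hB : B = α₁ * α₂ + α₁ * α₃ + α₂ * α₃) (hBlt : |B| < A / 3)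
    (c₁ c₂ c₃ : ℤ)
    (h : ∀ ε : ℤ, ε = 1 ∨ ε = -1 →
      (c₁, c₂, c₃) ≠ (0, 0, 0) ∧ (c₁, c₂, c₃) ≠ (ε, 0, 0) ∧
      (c₁, c₂, c₃) ≠ (0, ε, 0) ∧ (c₁, c₂, c₃) ≠ (0, 0, ε)) :
    A < ((c₁ : ℝ) ^ 2 + c₂ ^ 2 + c₃ ^ 2) * A +
      2 * ((c₁ : ℝ) * c₂ + c₂ * c₃ + c₁ * c₃) * B :=
  stmt_10_general A B hBlt c₁ c₂ c₃ h
end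

section
/- For rational (or real) numbers r, s: 1 + r² + s² ≥ |r + s + rs| whenever |r| ≥ 1 and |s| ≥ 1; and if additionally at least one of r, s is ≤ 0, then 1 + r² + s² ≥ 2|r + s + rs|. -/
/-!
Both bounds are sums of squares. Twice the gap in the first one is
`(r - s)² + (r - 1)² + (s - 1)²`, resp. `(r + s)² + (r + 1)² + (s + 1)²` on the other side.
For the doubled bound, `1 + r² + s² + 2 (r + s + r s) = (r + s + 1)²` and
`1 + r² + s² - 2 (r + s + r s) = (r - s - 1)² - 4 s`, which is nonnegative once `s ≤ 0`.
-/

section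

variable {R : Type*} [CommRing R] [LinearOrder R] [IsStrictOrderedRing R]

theorem abs_add_add_mul_le_one_add_sq_add_sq (r s : R) :
    |r + s + r * s| ≤ 1 + r ^ 2 + s ^ 2 :=
  abs_le'.2
    ⟨by nlinarith [sq_nonneg (r - s), sq_nonneg (r - 1), sq_nonneg (s - 1)],
     by nlinarith [sq_nonneg (r + s), sq_nonneg (r + 1), sq_nonneg (s + 1)]⟩

theorem two_mul_abs_add_add_mul_le_of_nonpos_right (r : R) {s : R} (hs : s ≤ 0) :
    2 * |r + s + r * s| ≤ 1 + r ^ 2 + s ^ 2 := by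
  rw [← abs_two, ← abs_mul]
  exact abs_le'.2 ⟨by nlinarith [sq_nonneg (r - s - 1)], by nlinarith [sq_nonneg (r + s + 1)]⟩

theorem two_mul_abs_add_add_mul_le_of_nonpos_left {r : R} (s : R) (hr : r ≤ 0) :
    2 * |r + s + r * s| ≤ 1 + r ^ 2 + s ^ 2 := by
  have h := two_mul_abs_add_add_mul_le_of_nonpos_right s hr
  rwa [add_comm s r, mul_comm s r, add_right_comm 1] at h

end

theorem stmt_12_general (r s : ℝ) :
    |r + s + r * s| ≤ 1 + r ^ 2 + s ^ 2 ∧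
    ((r ≤ 0 ∨ s ≤ 0) → 2 * |r + s + r * s| ≤ 1 + r ^ 2 + s ^ 2) :=
  ⟨abs_add_add_mul_le_one_add_sq_add_sq r s, fun h =>
    h.elim (two_mul_abs_add_add_mul_le_of_nonpos_left s)
      (two_mul_abs_add_add_mul_le_of_nonpos_right r)⟩

/-- For real r, s with |r| ≥ 1 and |s| ≥ 1: 1 + r² + s² ≥ |r + s + rs|;
and if additionally at least one of r, s is ≤ 0, then 1 + r² + s² ≥ 2|r + s + rs|. -/
theorem stmt_12 (r s : ℝ) (hr : 1 ≤ |r|) (hs : 1 ≤ |s|) :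
    |r + s + r * s| ≤ 1 + r ^ 2 + s ^ 2 ∧
    ((r ≤ 0 ∨ s ≤ 0) → 2 * |r + s + r * s| ≤ 1 + r ^ 2 + s ^ 2) :=
  stmt_12_general r s
end

section
/- Let f(x) = xⁿ + a_{n-1}x^{n-1} + ... + a₁x + a₀ ∈ ℤ[x] with |a_{n-1}| > 1 + |a_{n-2}| + ... + |a₁| + |a₀| and a₀ ≠ 0. Then f has exactly one root of absolute value > 1 and all other roots have absolute value < 1; in particular f(x) is irreducible over ℚ (Perron's criterion). -/
/-!
Write `f = Xⁿ + a_{n-1} X^{n-1} + ⋯ + a₀`. At a root `z` with `|z| ≥ 1`, the identity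
`z^{n-2} (z + a_{n-1}) = -(a_{n-2} z^{n-2} + ⋯ + a₀)` gives `|z| ≥ |a_{n-1}| - ∑_{k<n-1} |a_k| > 1`.
Since `|a₀| ≥ 1` is the modulus of the product of the roots, such a root exists. Comparing
coefficients in `f = (X - z) g` shows that the non-leading coefficients of the monic quotient `g`
have moduli summing to less than `1`, which keeps every root of `g` inside the open unit disc.
Finally, each factor of a nontrivial monic factorisation of `f` over `ℤ` has a nonzero integer
constant term, hence a root of modulus `≥ 1`: that would be two such roots of `f`.
-/

open Polynomial Finset

section NormedField

variable {K : Type*} [NormedField K]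

lemma norm_multiset_prod_lt_one {s : Multiset K} (hs : s ≠ 0) (h : ∀ z ∈ s, ‖z‖ < 1) :
    ‖s.prod‖ < 1 := by
  induction s using Multiset.induction_on with
  | empty => exact absurd rfl hs
  | cons a t ih =>
    have ha := h a (Multiset.mem_cons_self a t)
    rw [Multiset.prod_cons, norm_mul]
    rcases eq_or_ne t 0 with rfl | ht
    · simpa using ha
    · have ht1 := ih ht fun z hz => h z (Multiset.mem_cons_of_mem hz)
      exact mul_lt_one_of_nonneg_of_lt_one_left (norm_nonneg a) ha ht1.le

lemma Polynomial.Monic.eval_eq_sum_range_add_pow {R : Type*} [Semiring R] {p : R[X]}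
    (hp : p.Monic) (z : R) :
    p.eval z = ∑ i ∈ range p.natDegree, p.coeff i * z ^ i + z ^ p.natDegree := by
  rw [eval_eq_sum_range, sum_range_succ, hp.coeff_natDegree, one_mul]

lemma norm_sum_coeff_mul_pow_mul_le (p : K[X]) {z : K} (hz : 1 ≤ ‖z‖) (k : ℕ) :
    ‖∑ i ∈ range k, p.coeff i * z ^ i‖ * ‖z‖ ≤ (∑ i ∈ range k, ‖p.coeff i‖) * ‖z‖ ^ k := by
  calc ‖∑ i ∈ range k, p.coeff i * z ^ i‖ * ‖z‖
      ≤ (∑ i ∈ range k, ‖p.coeff i‖ * ‖z‖ ^ i) * ‖z‖ := by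
        gcongr
        refine (norm_sum_le _ _).trans_eq ?_
        simp only [norm_mul, norm_pow]
    _ = ∑ i ∈ range k, ‖p.coeff i‖ * ‖z‖ ^ (i + 1) := by
        rw [sum_mul]
        simp only [pow_succ, mul_assoc]
    _ ≤ ∑ i ∈ range k, ‖p.coeff i‖ * ‖z‖ ^ k := by
        gcongr with i hi
        exact mem_range.mp hi
    _ = (∑ i ∈ range k, ‖p.coeff i‖) * ‖z‖ ^ k := (sum_mul ..).symm

lemma norm_le_sum_norm_coeff_of_isRoot {p : K[X]} (hp : p.Monic) {z : K} (hz : p.IsRoot z)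
    (hz1 : 1 ≤ ‖z‖) : ‖z‖ ≤ ∑ i ∈ range p.natDegree, ‖p.coeff i‖ := by
  have hsum : z ^ p.natDegree = -∑ i ∈ range p.natDegree, p.coeff i * z ^ i := by
    rw [eq_neg_iff_add_eq_zero, add_comm, ← hp.eval_eq_sum_range_add_pow, hz.eq_zero]
  have key := norm_sum_coeff_mul_pow_mul_le p hz1 p.natDegree
  rw [← norm_neg, ← hsum, norm_pow, mul_comm] at key
  exact le_of_mul_le_mul_right key (pow_pos (by linarith) _)

lemma norm_coeff_sub_sum_le_norm_of_isRoot {p : K[X]} (hp : p.Monic) {k : ℕ}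
    (hdeg : p.natDegree = k + 1) {z : K} (hz : p.IsRoot z) (hz1 : 1 ≤ ‖z‖) :
    ‖p.coeff k‖ - ∑ i ∈ range k, ‖p.coeff i‖ ≤ ‖z‖ := by
  have hsum : z ^ k * (z + p.coeff k) = -∑ i ∈ range k, p.coeff i * z ^ i := by
    have h := hp.eval_eq_sum_range_add_pow z
    rw [hz.eq_zero, hdeg, sum_range_succ] at h
    linear_combination -h
  have key := norm_sum_coeff_mul_pow_mul_le p hz1 k
  rw [← norm_neg, ← hsum, norm_mul, norm_pow, mul_assoc, mul_comm] at key
  have hprod : ‖z + p.coeff k‖ * ‖z‖ ≤ ∑ i ∈ range k, ‖p.coeff i‖ :=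
    le_of_mul_le_mul_right key (pow_pos (by linarith) _)
  have htri : ‖p.coeff k‖ ≤ ‖z + p.coeff k‖ + ‖z‖ := by
    simpa using norm_sub_le (z + p.coeff k) z
  nlinarith [norm_nonneg (z + p.coeff k)]

lemma norm_mul_sum_norm_coeff_le (g : K[X]) (z : K) (k : ℕ) :
    ‖z‖ * ∑ i ∈ range (k + 1), ‖g.coeff i‖ ≤
      ∑ i ∈ range (k + 1), ‖((X - C z) * g).coeff i‖ + ∑ i ∈ range k, ‖g.coeff i‖ := by
  have hXg : ∑ i ∈ range (k + 1), ‖(X * g).coeff i‖ = ∑ i ∈ range k, ‖g.coeff i‖ := by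
    simp [sum_range_succ', coeff_X_mul]
  rw [← hXg, mul_sum, ← sum_add_distrib]
  refine sum_le_sum fun i _ => ?_
  rw [sub_mul, coeff_sub, coeff_C_mul]
  refine (le_of_eq ?_).trans (norm_sub_le ((X * g).coeff i - z * g.coeff i) ((X * g).coeff i))
  rw [sub_sub_cancel_left, norm_neg, norm_mul]

lemma sum_norm_coeff_lt_one_of_perron {g : K[X]} (hg : g.Monic) {k : ℕ}
    (hdeg : g.natDegree = k + 1) {z : K} (hz : 1 < ‖z‖)
    (hP : 1 + ∑ i ∈ range (k + 1), ‖((X - C z) * g).coeff i‖ < ‖((X - C z) * g).coeff (k + 1)‖) :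
    ∑ i ∈ range (k + 1), ‖g.coeff i‖ < 1 := by
  have htop : ‖((X - C z) * g).coeff (k + 1)‖ ≤ ‖g.coeff k‖ + ‖z‖ := by
    have hlead : g.coeff (k + 1) = 1 := hdeg ▸ hg.coeff_natDegree
    rw [sub_mul, coeff_sub, coeff_X_mul, coeff_C_mul, hlead, mul_one]
    exact norm_sub_le _ _
  have hsum := norm_mul_sum_norm_coeff_le g z k
  have hsplit := sum_range_succ (fun i => ‖g.coeff i‖) k
  have hmul : (‖z‖ - 1) * ∑ i ∈ range (k + 1), ‖g.coeff i‖ < (‖z‖ - 1) * 1 := by linarith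
  exact lt_of_mul_lt_mul_left hmul (by linarith)

lemma norm_lt_one_of_isRoot_divByMonic_of_perron {F : K[X]} (hF : F.Monic) {k : ℕ}
    (hdeg : F.natDegree = k + 2)
    (hP : 1 + ∑ i ∈ range (k + 1), ‖F.coeff i‖ < ‖F.coeff (k + 1)‖) {z : K} (hz : F.IsRoot z)
    (hz1 : 1 < ‖z‖) {w : K} (hw : (F /ₘ (X - C z)).IsRoot w) : ‖w‖ < 1 := by
  set g := F /ₘ (X - C z)
  have hfac : (X - C z) * g = F := mul_divByMonic_eq_iff_isRoot.mpr hz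
  have hg : g.Monic := (monic_X_sub_C z).of_mul_monic_left (hfac ▸ hF)
  have hgdeg : g.natDegree = k + 1 := by
    have := natDegree_mul (X_sub_C_ne_zero z) hg.ne_zero
    rw [hfac, hdeg, natDegree_X_sub_C] at this
    omega
  rw [← hfac] at hP
  have hS := sum_norm_coeff_lt_one_of_perron hg hgdeg hz1 hP
  by_contra! hw1
  have := norm_le_sum_norm_coeff_of_isRoot hg hw hw1
  rw [hgdeg] at this
  linarith

lemma roots_eq_cons_of_perron {F : K[X]} (hF : F.Monic) {k : ℕ} (hdeg : F.natDegree = k + 2)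
    (hP : 1 + ∑ i ∈ range (k + 1), ‖F.coeff i‖ < ‖F.coeff (k + 1)‖) {z : K} (hz : z ∈ F.roots)
    (hz1 : 1 ≤ ‖z‖) : 1 < ‖z‖ ∧ ∃ s, F.roots = z ::ₘ s ∧ ∀ w ∈ s, ‖w‖ < 1 := by
  have hroot : F.IsRoot z := isRoot_of_mem_roots hz
  have hgt : 1 < ‖z‖ := by
    have := norm_coeff_sub_sum_le_norm_of_isRoot hF hdeg hroot hz1
    linarith
  have hfac : (X - C z) * (F /ₘ (X - C z)) = F := mul_divByMonic_eq_iff_isRoot.mpr hroot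
  refine ⟨hgt, (F /ₘ (X - C z)).roots, ?_, fun w hw =>
    norm_lt_one_of_isRoot_divByMonic_of_perron hF hdeg hP hroot hgt (isRoot_of_mem_roots hw)⟩
  conv_lhs => rw [← hfac]
  rw [roots_mul (by rw [hfac]; exact hF.ne_zero), roots_X_sub_C, Multiset.singleton_add]

lemma exists_one_le_norm_mem_roots [IsAlgClosed K] {p : K[X]} (hp : p.Monic)
    (hdeg : p.natDegree ≠ 0) (h0 : 1 ≤ ‖p.coeff 0‖) : ∃ z ∈ p.roots, 1 ≤ ‖z‖ := by
  have hsplit : p.Splits := IsAlgClosed.splits p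
  have hne : p.roots ≠ 0 := by
    rwa [← Multiset.card_pos, pos_iff_ne_zero, ← hsplit.natDegree_eq_card_roots]
  by_contra! h
  have := norm_multiset_prod_lt_one hne h
  rw [hsplit.coeff_zero_eq_prod_roots_of_monic hp, norm_mul, norm_pow, norm_neg, norm_one,
    one_pow, one_mul] at h0
  linarith

end NormedField

lemma norm_coeff_map_intCast (p : ℤ[X]) (k : ℕ) :
    ‖(p.map (algebraMap ℤ ℂ)).coeff k‖ = |(p.coeff k : ℝ)| := by
  simp

lemma exists_one_le_norm_mem_roots_map {p : ℤ[X]} (hp : p.Monic) (hdeg : p.natDegree ≠ 0)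
    (h0 : p.coeff 0 ≠ 0) : ∃ z ∈ (p.map (algebraMap ℤ ℂ)).roots, 1 ≤ ‖z‖ := by
  refine exists_one_le_norm_mem_roots (hp.map _) (by rwa [hp.natDegree_map]) ?_
  rw [norm_coeff_map_intCast]
  exact_mod_cast Int.one_le_abs h0

lemma irreducible_map_of_card_roots_one_le_norm {f : ℤ[X]} (hf : f.Monic) (h0 : f.coeff 0 ≠ 0)
    (hcard : ((f.map (algebraMap ℤ ℂ)).roots.filter (fun z => 1 ≤ ‖z‖)).card = 1) :
    Irreducible (f.map (algebraMap ℤ ℚ)) := by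
  rw [algebraMap_int_eq, ← IsPrimitive.Int.irreducible_iff_irreducible_map_cast hf.isPrimitive,
    hf.irreducible_iff_natDegree]
  refine ⟨by rintro rfl; simp at hcard, fun g h hg hh hgh => ?_⟩
  have hpos : ∀ q : ℤ[X], q.Monic → q.natDegree ≠ 0 → q.coeff 0 ≠ 0 →
      0 < ((q.map (algebraMap ℤ ℂ)).roots.filter (fun z => 1 ≤ ‖z‖)).card := fun q hq hd hq0 =>
    let ⟨z, hz, hz1⟩ := exists_one_le_norm_mem_roots_map hq hd hq0
    Multiset.card_pos_iff_exists_mem.mpr ⟨z, Multiset.mem_filter_of_mem hz hz1⟩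
  by_contra! hdeg
  have hc0 : f.coeff 0 = g.coeff 0 * h.coeff 0 := by rw [← hgh, mul_coeff_zero]
  have hg_pos := hpos g hg hdeg.1 (left_ne_zero_of_mul (hc0 ▸ h0))
  have hh_pos := hpos h hh hdeg.2 (right_ne_zero_of_mul (hc0 ▸ h0))
  have hroots : (f.map (algebraMap ℤ ℂ)).roots =
      (g.map (algebraMap ℤ ℂ)).roots + (h.map (algebraMap ℤ ℂ)).roots := by
    rw [← hgh, Polynomial.map_mul,
      roots_mul (by rw [← Polynomial.map_mul, hgh]; exact (hf.map _).ne_zero)]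
  rw [hroots, Multiset.filter_add, Multiset.card_add] at hcard
  omega

/-- Perron's criterion: If f = xⁿ + a_{n-1}x^{n-1} + ... + a₀ ∈ ℤ[x] with
|a_{n-1}| > 1 + |a_{n-2}| + ... + |a₀| and a₀ ≠ 0, then f has exactly one complex root of
absolute value > 1 (with multiplicity), all other roots have absolute value < 1, and f is
irreducible over ℚ. -/
theorem stmt_16 (n : ℕ) (hn : 2 ≤ n) (f : Polynomial ℤ) (hmonic : f.Monic)
    (hdeg : f.natDegree = n) (ha0 : f.coeff 0 ≠ 0)
    (hperron : 1 + ∑ k ∈ Finset.range (n - 1), |f.coeff k| < |f.coeff (n - 1)|) :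
    (((f.map (algebraMap ℤ ℂ)).roots.filter (fun z => 1 < ‖z‖)).card = 1) ∧
    (∀ z ∈ (f.map (algebraMap ℤ ℂ)).roots, 1 < ‖z‖ ∨ ‖z‖ < 1) ∧
    Irreducible (f.map (algebraMap ℤ ℚ)) := by
  obtain ⟨k, rfl⟩ : ∃ k, n = k + 2 := ⟨n - 2, by omega⟩
  set F := f.map (algebraMap ℤ ℂ)
  have hF : F.Monic := hmonic.map _
  have hFdeg : F.natDegree = k + 2 := by rw [hmonic.natDegree_map, hdeg]
  have hP : 1 + ∑ i ∈ range (k + 1), ‖F.coeff i‖ < ‖F.coeff (k + 1)‖ := by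
    simp only [F, norm_coeff_map_intCast, ← Int.cast_abs]
    exact_mod_cast hperron
  obtain ⟨z, hz, hz1⟩ := exists_one_le_norm_mem_roots_map hmonic (by omega) ha0
  obtain ⟨hz_gt, s, hroots, hs⟩ := roots_eq_cons_of_perron hF hFdeg hP hz hz1
  have hfilter : ∀ (P : ℂ → Prop) [DecidablePred P], P z → (∀ w ∈ s, ¬ P w) →
      (F.roots.filter P).card = 1 := fun P _ hPz hPs => by
    rw [hroots, Multiset.filter_cons_of_pos _ hPz, Multiset.filter_eq_nil.mpr hPs,
      Multiset.card_cons, Multiset.card_zero]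
  refine ⟨hfilter _ hz_gt fun w hw => (hs w hw).not_gt, fun w hw => ?_,
    irreducible_map_of_card_roots_one_le_norm hmonic ha0
      (hfilter _ hz1 fun w hw => (hs w hw).not_ge)⟩
  rw [hroots, Multiset.mem_cons] at hw
  rcases hw with rfl | hw
  · exact Or.inl hz_gt
  · exact Or.inr (hs w hw)
end
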